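/- (Laplacian kernel bound) Let x_1,…,x_N ∈ ℝⁿ be nonzero, r_x = min_t ‖x_t‖₂ > 0, y_t = x_tᵀθ° + v_t, ε ≥ 0, I_ε^0 = {t : |v_t| ≤ ε}, γ₁ > 0 and α ∈ (0,1]. Assume ρ_α(X)/(1 + e^{−γ₁ε}) + e^{−γ₁ε}·|I_ε^0|/N > 1. Then for any maximizer θ* over ℝⁿ of θ ↦ ∑_{k=1}^N exp(−γ₁|y_k − x_kᵀθ|), it holds that ‖θ* − θ°‖₂ ≤ (1/(γ₁·α·r_x))·ln(1/μ), where μ = [(1+e^{−γ₁ε})/(|I_ε^0|/N + ρ_α(X) − 1)]·[ρ_α(X)/(1+e^{−γ₁ε}) + e^{−γ₁ε}·|I_ε^0|/N − 1]. -/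

import Mathlib

/-!
Let `η = θs - θo`, `s = e^{-γ₁ε}`, `q = |I_ε^0|/N`, `r = r_x` and `c = e^{-γ₁ max(α r ‖η‖ - ε, 0)}`.
At the competitor `θo` the residuals are the `v_t`, so every inlier contributes at least `s` and the
objective is at least `N q s`. At `θs` the residual of `t` is `v_t - x_tᵀη`; on the at least
`(q + ρ - 1) N` inliers lying in `𝓘_α(X, η)` its modulus is at least `α r ‖η‖ - ε`, so these terms
are at most `c`, and all other terms are at most `1`. Maximality of `θs` therefore gives
`(q + ρ - 1)(1 - c) ≤ 1 - q s`, which rearranges (using `ρ ≤ 1`) to `μ ≤ s c ≤ e^{-γ₁ α r ‖η‖}`;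
taking logarithms gives the bound.
-/

open scoped BigOperators

noncomputable section

/-- Euclidean dot product on `ℝⁿ`. -/
def dotR {n : ℕ} (u v : Fin n → ℝ) : ℝ := ∑ i, u i * v i

/-- Euclidean 2-norm on `ℝⁿ`. -/
def nrm {n : ℕ} (v : Fin n → ℝ) : ℝ := Real.sqrt (∑ i, v i ^ 2)

/-- The index set `𝓘_α(X,η) = {t : |x_tᵀη| ≥ α‖x_t‖₂‖η‖₂}`. -/
def Iset {n N : ℕ} (x : Fin N → Fin n → ℝ) (a : ℝ) (η : Fin n → ℝ) : Finset (Fin N) :=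
  Finset.univ.filter fun t => a * nrm (x t) * nrm η ≤ |dotR (x t) η|

/-- The correlation measure `ρ_α(X) = (1/N)·inf_{η ≠ 0} |𝓘_α(X,η)|`. -/
def rhoX {n N : ℕ} (x : Fin N → Fin n → ℝ) (a : ℝ) : ℝ :=
  (1 / N) * sInf ((fun η : Fin n → ℝ => ((Iset x a η).card : ℝ)) '' {η | η ≠ 0})

/-- The constant `μ` as a function of `s = e^{-γ₁ε}`, `q = |I_ε^0|/N` and `ρ = ρ_α(X)`. -/
def muVal (s q ρ : ℝ) : ℝ := (1 + s) / (q + ρ - 1) * (ρ / (1 + s) + s * q - 1)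

open Finset Real

section Euclidean

variable {n : ℕ}

lemma nrm_nonneg (v : Fin n → ℝ) : 0 ≤ nrm v := sqrt_nonneg _

lemma nrm_zero : nrm (0 : Fin n → ℝ) = 0 := by simp [nrm]

lemma nrm_pos_of_ne_zero {v : Fin n → ℝ} (hv : v ≠ 0) : 0 < nrm v := by
  obtain ⟨i, hi⟩ := Function.ne_iff.mp hv
  exact sqrt_pos.mpr <| lt_of_lt_of_le (pow_pos (abs_pos.mpr hi) 2 |>.trans_eq (sq_abs _))
    (single_le_sum (f := fun j => v j ^ 2) (fun j _ => sq_nonneg _) (mem_univ i))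

lemma dotR_zero_right (u : Fin n → ℝ) : dotR u 0 = 0 := by simp [dotR]

lemma dotR_sub_right (u w z : Fin n → ℝ) : dotR u (w - z) = dotR u w - dotR u z := by
  simp [dotR, mul_sub, sum_sub_distrib]

end Euclidean

section Correlation

variable {n N : ℕ} (x : Fin N → Fin n → ℝ) (a : ℝ)

lemma Iset_zero : Iset x a 0 = univ := by
  ext t
  simp [Iset, nrm_zero, dotR_zero_right]

lemma rhoX_nonneg : 0 ≤ rhoX x a :=
  mul_nonneg (by positivity) <| sInf_nonneg <| by rintro _ ⟨η, -, rfl⟩; positivity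

lemma sInf_card_Iset_le {η : Fin n → ℝ} (hη : η ≠ 0) :
    sInf ((fun η : Fin n → ℝ => (#(Iset x a η) : ℝ)) '' {η | η ≠ 0}) ≤ #(Iset x a η) :=
  csInf_le ⟨0, by rintro _ ⟨η, -, rfl⟩; positivity⟩ ⟨η, hη, rfl⟩

lemma sInf_card_Iset_le_card_univ :
    sInf ((fun η : Fin n → ℝ => (#(Iset x a η) : ℝ)) '' {η | η ≠ 0}) ≤ N := by
  rcases Set.eq_empty_or_nonempty {η : Fin n → ℝ | η ≠ 0} with h | ⟨η, hη⟩
  · simp [h]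
  · refine (sInf_card_Iset_le x a hη).trans ?_
    exact_mod_cast (card_le_univ _).trans_eq (Fintype.card_fin N)

lemma rhoX_mul_le_card_Iset (hN : 0 < N) (η : Fin n → ℝ) : rhoX x a * N ≤ #(Iset x a η) := by
  have hρ : rhoX x a * N = sInf ((fun η : Fin n → ℝ => (#(Iset x a η) : ℝ)) '' {η | η ≠ 0}) := by
    rw [rhoX]; field_simp
  rw [hρ]
  by_cases hη : η = 0
  · simpa [hη, Iset_zero] using sInf_card_Iset_le_card_univ x a
  · exact sInf_card_Iset_le x a hη

lemma rhoX_le_one (hN : 0 < N) : rhoX x a ≤ 1 := by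
  have h := rhoX_mul_le_card_Iset x a hN 0
  rw [Iset_zero, card_univ, Fintype.card_fin] at h
  exact le_of_mul_le_mul_right (by simpa using h) (by exact_mod_cast hN)

end Correlation

section KernelSums

variable {ι : Type*} [Fintype ι] {γ : ℝ}

lemma card_mul_exp_le_sum_exp (hγ : 0 ≤ γ) (u : ι → ℝ) {ε : ℝ} {B : Finset ι}
    (hB : ∀ t ∈ B, |u t| ≤ ε) :
    #B * exp (-(γ * ε)) ≤ ∑ t, exp (-(γ * |u t|)) :=
  calc #B * exp (-(γ * ε)) = ∑ _t ∈ B, exp (-(γ * ε)) := by rw [sum_const, nsmul_eq_mul]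
    _ ≤ ∑ t ∈ B, exp (-(γ * |u t|)) :=
      sum_le_sum fun t ht =>
        exp_le_exp.mpr <| neg_le_neg <| mul_le_mul_of_nonneg_left (hB t ht) hγ
    _ ≤ ∑ t, exp (-(γ * |u t|)) :=
      sum_le_sum_of_subset_of_nonneg (subset_univ _) fun _ _ _ => (exp_pos _).le

variable [DecidableEq ι]

lemma sum_exp_le_card_sub (hγ : 0 ≤ γ) (w : ι → ℝ) {d : ℝ} {S : Finset ι}
    (hS : ∀ t ∈ S, d ≤ |w t|) :
    ∑ t, exp (-(γ * |w t|)) ≤ Fintype.card ι - #S * (1 - exp (-(γ * d))) := by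
  have hin : ∑ t ∈ S, exp (-(γ * |w t|)) ≤ #S * exp (-(γ * d)) := by
    rw [← nsmul_eq_mul, ← sum_const]
    exact sum_le_sum fun t ht =>
      exp_le_exp.mpr <| neg_le_neg <| mul_le_mul_of_nonneg_left (hS t ht) hγ
  have hout : ∑ t ∈ Sᶜ, exp (-(γ * |w t|)) ≤ #Sᶜ := by
    rw [← nsmul_one, ← sum_const]
    exact sum_le_sum fun t _ => exp_le_one_iff.mpr <| neg_nonpos.mpr <| by positivity
  rw [card_compl, Nat.cast_sub (card_le_univ S)] at hout
  rw [← sum_add_sum_compl S]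
  linarith

lemma card_add_card_sub_mul_le_of_sum_exp_le {u w : ι → ℝ} {ε d : ℝ} {A B : Finset ι}
    (hγ : 0 ≤ γ) (hd : 0 ≤ d)
    (hB : ∀ t ∈ B, |u t| ≤ ε) (hA : ∀ t ∈ A ∩ B, d ≤ |w t|)
    (hle : ∑ t, exp (-(γ * |u t|)) ≤ ∑ t, exp (-(γ * |w t|))) :
    (#A + #B - Fintype.card ι : ℝ) * (1 - exp (-(γ * d))) ≤
      Fintype.card ι - #B * exp (-(γ * ε)) := by
  have hinter : (#A + #B - Fintype.card ι : ℝ) ≤ #(A ∩ B) := by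
    have := card_union_add_card_inter A B
    have := card_le_univ (A ∪ B)
    rw [sub_le_iff_le_add]; exact_mod_cast (by omega : #A + #B ≤ #(A ∩ B) + Fintype.card ι)
  have hc : 0 ≤ 1 - exp (-(γ * d)) := sub_nonneg.mpr <| exp_le_one_iff.mpr <| by nlinarith
  nlinarith [card_mul_exp_le_sum_exp hγ u hB, sum_exp_le_card_sub hγ w hA,
    mul_le_mul_of_nonneg_right hinter hc]

end KernelSums

section Constant

variable {s q ρ : ℝ}

lemma one_lt_add_of_one_lt_div_add_mul (hs0 : 0 ≤ s) (hs1 : s ≤ 1) (hq : 0 ≤ q) (hρ : 0 ≤ ρ)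
    (h : 1 < ρ / (1 + s) + s * q) : 1 < q + ρ := by
  have : ρ / (1 + s) ≤ ρ := div_le_self hρ (by linarith)
  nlinarith

lemma muVal_pos (hs0 : 0 ≤ s) (hs1 : s ≤ 1) (hq : 0 ≤ q) (hρ : 0 ≤ ρ)
    (h : 1 < ρ / (1 + s) + s * q) : 0 < muVal s q ρ := by
  have := one_lt_add_of_one_lt_div_add_mul hs0 hs1 hq hρ h
  unfold muVal
  exact mul_pos (div_pos (by linarith) (by linarith)) (by linarith)

lemma muVal_le_mul {c : ℝ} (hs0 : 0 ≤ s) (hs1 : s ≤ 1) (hρ1 : ρ ≤ 1) (hqρ : 1 < q + ρ)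
    (h : (q + ρ - 1) * (1 - c) ≤ 1 - q * s) : muVal s q ρ ≤ s * c := by
  have hmu : muVal s q ρ * (q + ρ - 1) = ρ + s * q * (1 + s) - (1 + s) := by
    have : q + ρ - 1 ≠ 0 := by linarith
    have : 1 + s ≠ 0 := by linarith
    unfold muVal
    field_simp
  rw [← mul_le_mul_iff_of_pos_right (by linarith : 0 < q + ρ - 1), hmu]
  nlinarith [mul_nonneg (sub_nonneg.mpr hs1) (sub_nonneg.mpr hρ1), mul_le_mul_of_nonneg_left h hs0]

end Constant

section Model

variable {n N : ℕ} {x : Fin N → Fin n → ℝ} {a : ℝ}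

lemma iInf_nrm_pos (hN : 0 < N) (hx : ∀ t, x t ≠ 0) : 0 < ⨅ t, nrm (x t) := by
  have : Nonempty (Fin N) := ⟨⟨0, hN⟩⟩
  obtain ⟨t₀, ht₀⟩ := Finite.exists_min fun t => nrm (x t)
  exact (nrm_pos_of_ne_zero (hx t₀)).trans_le (le_ciInf ht₀)

lemma sub_le_abs_sub_dotR {v : Fin N → ℝ} {η : Fin n → ℝ} {ε r : ℝ} {t : Fin N} (ha : 0 ≤ a)
    (hr : r ≤ nrm (x t)) (ht : t ∈ Iset x a η) (hv : |v t| ≤ ε) :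
    a * r * nrm η - ε ≤ |v t - dotR (x t) η| := by
  have hcorr : a * nrm (x t) * nrm η ≤ |dotR (x t) η| := (mem_filter.mp ht).2
  have : a * r * nrm η ≤ a * nrm (x t) * nrm η := by
    gcongr
    exact nrm_nonneg η
  calc a * r * nrm η - ε ≤ |dotR (x t) η| - |v t| := by linarith
    _ ≤ |v t - dotR (x t) η| := abs_sub_comm (v t) _ ▸ abs_sub_abs_le_abs_sub _ _

lemma add_rhoX_sub_one_mul_le_of_sum_exp_le {θo θs : Fin n → ℝ} {v y : Fin N → ℝ} {ε γ r : ℝ}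
    (hN : 0 < N) (hy : ∀ t, y t = dotR (x t) θo + v t) (hγ : 0 ≤ γ) (ha : 0 ≤ a)
    (hr : ∀ t, r ≤ nrm (x t))
    (hmax : ∑ k, exp (-(γ * |y k - dotR (x k) θo|)) ≤ ∑ k, exp (-(γ * |y k - dotR (x k) θs|))) :
    (#{t | |v t| ≤ ε} / N + rhoX x a - 1) *
        (1 - exp (-(γ * max (a * r * nrm (θs - θo) - ε) 0))) ≤
      1 - #{t | |v t| ≤ ε} / N * exp (-(γ * ε)) := by
  set B : Finset (Fin N) := {t | |v t| ≤ ε}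
  set c := exp (-(γ * max (a * r * nrm (θs - θo) - ε) 0))
  have hres : ∀ t, y t - dotR (x t) θs = v t - dotR (x t) (θs - θo) := fun t => by
    rw [hy, dotR_sub_right]; ring
  have hyo : ∀ t, y t - dotR (x t) θo = v t := fun t => by rw [hy]; ring
  have hkernel := card_add_card_sub_mul_le_of_sum_exp_le (u := v) (w := fun t => y t - dotR (x t) θs)
    (A := Iset x a (θs - θo)) (B := B) hγ (le_max_right (a * r * nrm (θs - θo) - ε) 0)
    (fun t ht => (mem_filter.mp ht).2)
    (fun t ht => by
      rw [hres]
      exact max_le (sub_le_abs_sub_dotR ha (hr t) (mem_inter.mp ht).1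
        (mem_filter.mp (mem_inter.mp ht).2).2) (abs_nonneg _))
    (by simpa only [hyo] using hmax)
  rw [Fintype.card_fin] at hkernel
  have hN' : (0 : ℝ) < N := by exact_mod_cast hN
  have hA := rhoX_mul_le_card_Iset x a hN (θs - θo)
  have hc : 0 ≤ 1 - c := sub_nonneg.mpr <| exp_le_one_iff.mpr <| neg_nonpos.mpr <| by positivity
  rw [← mul_le_mul_iff_of_pos_right hN']
  calc (#B / N + rhoX x a - 1) * (1 - c) * N = (#B + rhoX x a * N - N) * (1 - c) := by
        field_simp
    _ ≤ (#(Iset x a (θs - θo)) + #B - N) * (1 - c) := mul_le_mul_of_nonneg_right (by linarith) hc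
    _ ≤ N - #B * exp (-(γ * ε)) := hkernel
    _ = (1 - #B / N * exp (-(γ * ε))) * N := by field_simp

end Model

theorem mce_laplacian_bound_general {n N : ℕ} (hN : 0 < N)
    (x : Fin N → Fin n → ℝ) (hx : ∀ t, x t ≠ 0)
    (θo : Fin n → ℝ) (v y : Fin N → ℝ)
    (hy : ∀ t, y t = dotR (x t) θo + v t)
    (ε : ℝ) (hε : 0 ≤ ε)
    (γ₁ : ℝ) (hγ₁ : 0 < γ₁) (a : ℝ) (ha : 0 < a)
    (hstab : 1 <
      rhoX x a / (1 + Real.exp (-(γ₁ * ε))) +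
        Real.exp (-(γ₁ * ε)) *
          (((Finset.univ.filter fun t => |v t| ≤ ε).card : ℝ) / N))
    (θs : Fin n → ℝ)
    (hmax : ∀ θ : Fin n → ℝ,
      ∑ k, Real.exp (-(γ₁ * |y k - dotR (x k) θ|)) ≤
        ∑ k, Real.exp (-(γ₁ * |y k - dotR (x k) θs|))) :
    nrm (θs - θo) ≤
      (1 / (γ₁ * a * (⨅ t, nrm (x t)))) *
        Real.log (1 /
          muVal (Real.exp (-(γ₁ * ε)))
            (((Finset.univ.filter fun t => |v t| ≤ ε).card : ℝ) / N)
            (rhoX x a)) := by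
  set s := exp (-(γ₁ * ε))
  set q : ℝ := #{t | |v t| ≤ ε} / N
  set r := ⨅ t, nrm (x t)
  set D := a * r * nrm (θs - θo)
  have hs0 : 0 < s := exp_pos _
  have hs1 : s ≤ 1 := exp_le_one_iff.mpr <| neg_nonpos.mpr <| by positivity
  have hq : 0 ≤ q := by positivity
  have hρ0 := rhoX_nonneg x a
  have hr : 0 < r := iInf_nrm_pos hN hx
  have hstab' : 1 < rhoX x a / (1 + s) + s * q := by simpa only [mul_comm s] using hstab
  have hqρ := one_lt_add_of_one_lt_div_add_mul hs0.le hs1 hq hρ0 hstab'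
  have hμ := muVal_pos hs0.le hs1 hq hρ0 hstab'
  have hoverlap := add_rhoX_sub_one_mul_le_of_sum_exp_le (x := x) (ε := ε) hN hy hγ₁.le ha.le
    (fun t => ciInf_le (Finite.bddBelow_range _) t) (hmax θo)
  have hμD : muVal s q (rhoX x a) ≤ exp (-(γ₁ * D)) :=
    calc muVal s q (rhoX x a) ≤ s * exp (-(γ₁ * max (D - ε) 0)) :=
          muVal_le_mul hs0.le hs1 (rhoX_le_one x a hN) hqρ hoverlap
      _ ≤ s * exp (-(γ₁ * (D - ε))) := by gcongr; exact le_max_left _ _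
      _ = exp (-(γ₁ * D)) := by rw [← exp_add]; ring_nf
  have hlog : γ₁ * D ≤ log (1 / muVal s q (rhoX x a)) := by
    rw [one_div, log_inv, le_neg, ← log_exp (-(γ₁ * D))]
    exact log_le_log hμ hμD
  rw [one_div_mul_eq_div, le_div_iff₀ (by positivity)]
  linarith

/-- the error bound for the Laplacian-kernel maximum correntropy
estimator (`ℓ(a) = |a|`). -/
theorem mce_laplacian_bound {n N : ℕ} (hN : 0 < N)
    (x : Fin N → Fin n → ℝ) (hx : ∀ t, x t ≠ 0)
    (θo : Fin n → ℝ) (v y : Fin N → ℝ)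
    (hy : ∀ t, y t = dotR (x t) θo + v t)
    (ε : ℝ) (hε : 0 ≤ ε)
    (γ₁ : ℝ) (hγ₁ : 0 < γ₁) (a : ℝ) (ha : 0 < a) (ha1 : a ≤ 1)
    (hstab : 1 <
      rhoX x a / (1 + Real.exp (-(γ₁ * ε))) +
        Real.exp (-(γ₁ * ε)) *
          (((Finset.univ.filter fun t => |v t| ≤ ε).card : ℝ) / N))
    (θs : Fin n → ℝ)
    (hmax : ∀ θ : Fin n → ℝ,
      ∑ k, Real.exp (-(γ₁ * |y k - dotR (x k) θ|)) ≤
        ∑ k, Real.exp (-(γ₁ * |y k - dotR (x k) θs|))) :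
    nrm (θs - θo) ≤
      (1 / (γ₁ * a * (⨅ t, nrm (x t)))) *
        Real.log (1 /
          muVal (Real.exp (-(γ₁ * ε)))
            (((Finset.univ.filter fun t => |v t| ≤ ε).card : ℝ) / N)
            (rhoX x a)) :=
  mce_laplacian_bound_general hN x hx θo v y hy ε hε γ₁ hγ₁ a ha hstab θs hmax
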